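/- arXiv:1910.07668 — 4 statements merged into one kernel-verified Lean document; each statement's English description precedes it below -/
import Mathlib

section
/- Let Δ ⊆ F_p^m, L = Δ^c + uF_p^m and L^c = Δ + uF_p^m. For any a ∈ R^m written as a = α + uβ, the Lee weights of the corresponding codewords satisfy w_L(c_{L^c}(a)) + w_L(c_L(a)) = 2p^{2m−1}(p−1) − p^{2m−1}(p−1)·δ_{0,α}·(δ_{0,β} + δ_{0,α+β}), where δ is the Kronecker delta. -/
open Finset

lemma count_aux {G : Type*} [AddCommGroup G] [Fintype G] [DecidableEq G]
    {p : ℕ} [Fact p.Prime] (f : G →+ ZMod p) (hf : Function.Surjective f) :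
    p * (univ.filter (fun x => f x = 0)).card = Fintype.card G := by
  have h1 : Nat.card G = Nat.card (G ⧸ f.ker) * Nat.card f.ker :=
    AddSubgroup.card_eq_card_quotient_mul_card_addSubgroup f.ker
  have h2 : Nat.card (G ⧸ f.ker) = p := by
    rw [Nat.card_congr (QuotientAddGroup.quotientKerEquivOfSurjective f hf).toEquiv]
    simp [Nat.card_eq_fintype_card, ZMod.card]
  have h3 : Nat.card f.ker = (univ.filter (fun x => f x = 0)).card := by
    rw [← Fintype.card_subtype, Nat.card_eq_fintype_card]
    exact Fintype.card_congr (Equiv.subtypeEquivRight (fun x => f.mem_ker))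
  rw [Nat.card_eq_fintype_card, h2, h3] at h1
  omega

def pairHom (p m : ℕ) (v w : Fin m → ZMod p) :
    ((Fin m → ZMod p) × (Fin m → ZMod p)) →+ ZMod p := AddMonoidHom.mk'
  (fun x => (∑ i, v i * x.1 i) + (∑ i, w i * x.2 i))
  (by intro a b
      have h1 : ∀ i, v i * (a + b).1 i = v i * a.1 i + v i * b.1 i := by
        intro i; rw [Prod.fst_add, Pi.add_apply, mul_add]
      have h2 : ∀ i, w i * (a + b).2 i = w i * a.2 i + w i * b.2 i := by
        intro i; rw [Prod.snd_add, Pi.add_apply, mul_add]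
      simp only [h1, h2, Finset.sum_add_distrib]
      ring)

lemma key_count (p m : ℕ) [Fact p.Prime] (hm : 1 ≤ m)
    (v w : Fin m → ZMod p) (h : ¬(v = 0 ∧ w = 0)) :
    ∑ c : Fin m → ZMod p, ∑ d : Fin m → ZMod p,
      (if (∑ i, v i * c i) + (∑ i, w i * d i) ≠ 0 then (1:ℤ) else 0)
      = (p:ℤ) ^ (2 * m) - (p:ℤ) ^ (2 * m - 1) := by
  classical
  have hp1 : 1 ≤ p := (Fact.out : p.Prime).one_lt.le
  set f := pairHom p m v w with hf
  have hsurj : Function.Surjective f := by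
    intro t
    rcases not_and_or.mp h with hv | hw
    · obtain ⟨j, hj⟩ := Function.ne_iff.mp hv
      simp only [Pi.zero_apply] at hj
      refine ⟨(Pi.single j ((v j)⁻¹ * t), 0), ?_⟩
      simp only [hf, pairHom, AddMonoidHom.mk'_apply, Pi.zero_apply, mul_zero, Finset.sum_const_zero,
        add_zero, Pi.single_apply, mul_ite, mul_zero, Finset.sum_ite_eq', mem_univ, if_true]
      rw [← mul_assoc, mul_inv_cancel₀ hj, one_mul]
    · obtain ⟨j, hj⟩ := Function.ne_iff.mp hw
      simp only [Pi.zero_apply] at hj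
      refine ⟨(0, Pi.single j ((w j)⁻¹ * t)), ?_⟩
      simp only [hf, pairHom, AddMonoidHom.mk'_apply, Pi.zero_apply, mul_zero, Finset.sum_const_zero,
        zero_add, Pi.single_apply, mul_ite, mul_zero, Finset.sum_ite_eq', mem_univ, if_true]
      rw [← mul_assoc, mul_inv_cancel₀ hj, one_mul]
  have hcardG : Fintype.card ((Fin m → ZMod p) × (Fin m → ZMod p)) = p ^ (2 * m) := by
    simp [Fintype.card_prod, ← pow_add, two_mul]
  have hker : (univ.filter (fun x : (Fin m → ZMod p) × (Fin m → ZMod p) => f x = 0)).card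
      = p ^ (2 * m - 1) := by
    have hc := count_aux f hsurj
    rw [hcardG] at hc
    have h2m : 2 * m = (2 * m - 1) + 1 := by omega
    rw [h2m, pow_succ, mul_comm (p ^ (2 * m - 1)) p] at hc
    exact Nat.eq_of_mul_eq_mul_left (by omega) hc
  have hsum : ∑ c : Fin m → ZMod p, ∑ d : Fin m → ZMod p,
      (if (∑ i, v i * c i) + (∑ i, w i * d i) ≠ 0 then (1:ℤ) else 0)
      = ∑ x : (Fin m → ZMod p) × (Fin m → ZMod p), (if f x ≠ 0 then (1:ℤ) else 0) := by
    rw [← Finset.univ_product_univ, Finset.sum_product]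
    rfl
  rw [hsum, Finset.sum_boole]
  clear hsum hsurj h
  have hsplit : (univ.filter (fun x : (Fin m → ZMod p) × (Fin m → ZMod p) => f x = 0)).card
      + (univ.filter (fun x : (Fin m → ZMod p) × (Fin m → ZMod p) => ¬ f x = 0)).card
      = p ^ (2 * m) := by
    rw [Finset.card_filter_add_card_filter_not, Finset.card_univ, hcardG]
  have hle : p ^ (2 * m - 1) ≤ p ^ (2 * m) := Nat.pow_le_pow_right hp1 (by omega)
  have hcard : (univ.filter
      (fun x : (Fin m → ZMod p) × (Fin m → ZMod p) => ¬ f x = 0)).card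
      = p ^ (2 * m) - p ^ (2 * m - 1) := by omega
  simp only [ne_eq, hcard]
  push_cast [Nat.cast_sub hle]
  ring



open scoped Classical in
/-- For `Δ ⊆ F_p^m`, `L = Δᶜ + uF_p^m`, `L^c = Δ + uF_p^m`, and
`a = α + uβ ∈ R^m`, the Lee weights satisfy
`w_L(c_{L^c}(a)) + w_L(c_L(a)) = 2p^{2m-1}(p-1) - p^{2m-1}(p-1)·δ_{0,α}(δ_{0,β} + δ_{0,α+β})`.
Here `W S` is the Lee weight of the codeword `(⟨a, l⟩)_{l ∈ S + uF_p^m}`. -/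
theorem lee_weight_sum_formula (p m : ℕ) [Fact p.Prime] (hp : Odd p)
    (hm : 1 ≤ m) (Δ : Set (Fin m → ZMod p)) (α β : Fin m → ZMod p)
    (lw : DualNumber (ZMod p) → ℤ)
    (hlw : ∀ z : DualNumber (ZMod p),
      lw z = (if z.snd ≠ 0 then 1 else 0) + (if z.fst + z.snd ≠ 0 then 1 else 0))
    (W : Set (Fin m → ZMod p) → ℤ)
    (hW : ∀ S : Set (Fin m → ZMod p), W S =
      ∑ c : Fin m → ZMod p, ∑ d : Fin m → ZMod p,
        if c ∈ S then
          lw (∑ i, (TrivSqZeroExt.inl (α i) + TrivSqZeroExt.inr (β i) :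
              DualNumber (ZMod p)) *
            (TrivSqZeroExt.inl (c i) + TrivSqZeroExt.inr (d i)))
        else 0) :
    W Δ + W Δᶜ =
      2 * (p : ℤ) ^ (2 * m - 1) * ((p : ℤ) - 1) -
        (p : ℤ) ^ (2 * m - 1) * ((p : ℤ) - 1) *
          ((if α = 0 then 1 else 0) *
            ((if β = 0 then 1 else 0) + (if α + β = 0 then 1 else 0))) := by
  set z : (Fin m → ZMod p) → (Fin m → ZMod p) → DualNumber (ZMod p) :=
    fun c d => ∑ i, (TrivSqZeroExt.inl (α i) + TrivSqZeroExt.inr (β i) :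
      DualNumber (ZMod p)) * (TrivSqZeroExt.inl (c i) + TrivSqZeroExt.inr (d i))
    with hz
  have hsnd : ∀ c d, (z c d).snd = (∑ i, β i * c i) + (∑ i, α i * d i) := by
    intro c d
    rw [hz]
    simp only [TrivSqZeroExt.snd_sum, TrivSqZeroExt.snd_mul, TrivSqZeroExt.fst_add,
      TrivSqZeroExt.snd_add, TrivSqZeroExt.fst_inl, TrivSqZeroExt.snd_inl,
      TrivSqZeroExt.fst_inr, TrivSqZeroExt.snd_inr, zero_add, add_zero, smul_eq_mul,
      MulOpposite.op_smul, MulOpposite.smul_eq_mul_unop, MulOpposite.unop_op]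
    rw [← Finset.sum_add_distrib]
    exact Finset.sum_congr rfl fun i _ => by ring
  have hfst : ∀ c d, (z c d).fst = ∑ i, α i * c i := by
    intro c d
    rw [hz]
    simp [TrivSqZeroExt.fst_sum, TrivSqZeroExt.fst_mul]
  have hfs : ∀ c d, (z c d).fst + (z c d).snd
      = (∑ i, (α i + β i) * c i) + (∑ i, α i * d i) := by
    intro c d
    rw [hfst, hsnd]
    rw [show (∑ i, (α i + β i) * c i) = (∑ i, α i * c i) + ∑ i, β i * c i by
      rw [← Finset.sum_add_distrib]; exact Finset.sum_congr rfl fun i _ => by ring]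
    ring
  have hcomb : W Δ + W Δᶜ = ∑ c : Fin m → ZMod p, ∑ d : Fin m → ZMod p,
      ((if (∑ i, β i * c i) + (∑ i, α i * d i) ≠ 0 then (1:ℤ) else 0)
        + (if (∑ i, (α i + β i) * c i) + (∑ i, α i * d i) ≠ 0 then (1:ℤ) else 0)) := by
    rw [hW, hW, ← Finset.sum_add_distrib]
    refine Finset.sum_congr rfl fun c _ => ?_
    rw [← Finset.sum_add_distrib]
    refine Finset.sum_congr rfl fun d _ => ?_
    have hval : lw (z c d) = (if (∑ i, β i * c i) + (∑ i, α i * d i) ≠ 0 then (1:ℤ) else 0)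
        + (if (∑ i, (α i + β i) * c i) + (∑ i, α i * d i) ≠ 0 then (1:ℤ) else 0) := by
      rw [hlw, hfs, hsnd]
    by_cases hc : c ∈ Δ
    · simp only [hc, Set.mem_compl_iff, not_true_eq_false, if_true, if_false, add_zero]
      exact hval
    · simp only [hc, Set.mem_compl_iff, not_false_eq_true, if_true, if_false, zero_add]
      exact hval
  rw [hcomb]
  simp_rw [Finset.sum_add_distrib]
  by_cases hboth : α = 0 ∧ β = 0
  · obtain ⟨hα, hβ⟩ := hboth
    subst hα; subst hβ
    simp only [Pi.zero_apply, zero_mul, Finset.sum_const_zero, add_zero, zero_add,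
      ne_eq, not_true_eq_false, if_false, if_pos rfl, ite_self]
    simp
    ring
  · have k1 := key_count p m hm β α (fun hh => hboth ⟨hh.2, hh.1⟩)
    have k2 := key_count p m hm (α + β) α (by
      rintro ⟨h1, h2⟩
      exact hboth ⟨h2, by simpa [h2] using h1⟩)
    simp only [Pi.add_apply] at k2
    rw [k1, k2]
    have hdelta : (if α = 0 then (1:ℤ) else 0) *
        ((if β = 0 then (1:ℤ) else 0) + (if α + β = 0 then 1 else 0)) = 0 := by
      by_cases hα : α = 0
      · have hβ : β ≠ 0 := fun hβ => hboth ⟨hα, hβ⟩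
        have hαβ : α + β ≠ 0 := by simpa [hα] using hβ
        simp [hα, hβ, hαβ]
      · simp [hα]
    rw [hdelta]
    have hpow : (p:ℤ) ^ (2 * m) = (p:ℤ) ^ (2 * m - 1) * p := by
      rw [← pow_succ]
      congr 1
      exact (Nat.sub_add_cancel (le_trans hm (Nat.le_mul_of_pos_left m two_pos))).symm
    rw [hpow]
    ring
end

section
/- (Theorem 3.1, nonzero-α case) Let Δ = ⟨(r,0,...,0)⟩, 1 ≤ r ≤ p−1, L = Δ^c + uF_p^m. If a = α + uβ with α ≠ 0, then w_L(c_L(a)) = 2p^{m−1}(p−1)(p^m − r − 1). -/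
open Finset

lemma phi_single {p m : ℕ} [NeZero p] (α : Fin m → ZMod p) (j : Fin m) (x : ZMod p) :
    ∑ i, α i * (Pi.single j x : Fin m → ZMod p) i = α j * x := by
  rw [Finset.sum_eq_single j]
  · simp
  · intro i _ hi; simp [Pi.single_apply, hi]
  · simp

lemma fiber_card {p : ℕ} [Fact p.Prime] (m : ℕ) (hm : 1 ≤ m)
    (α : Fin m → ZMod p) (hα : α ≠ 0) (s : ZMod p) :
    (univ.filter (fun d : Fin m → ZMod p => ∑ i, α i * d i = s)).card = p ^ (m - 1) := by
  obtain ⟨j, hj⟩ : ∃ j, α j ≠ 0 := by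
    by_contra h; push_neg at h; exact hα (funext h)
  have key : ∀ s t : ZMod p,
      (univ.filter (fun d : Fin m → ZMod p => ∑ i, α i * d i = s)).card =
      (univ.filter (fun d : Fin m → ZMod p => ∑ i, α i * d i = t)).card := by
    intro s t
    refine Finset.card_bij' (fun d _ => d + Pi.single j ((α j)⁻¹ * (t - s)))
      (fun d _ => d + Pi.single j ((α j)⁻¹ * (s - t))) ?_ ?_ ?_ ?_
    · intro d hd
      simp only [mem_filter, mem_univ, true_and] at hd ⊢
      simp only [Pi.add_apply, mul_add, Finset.sum_add_distrib, hd, phi_single,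
        mul_inv_cancel_left₀ hj]
      ring
    · intro d hd
      simp only [mem_filter, mem_univ, true_and] at hd ⊢
      simp only [Pi.add_apply, mul_add, Finset.sum_add_distrib, hd, phi_single,
        mul_inv_cancel_left₀ hj]
      ring
    · intro d _; funext i; simp only [Pi.add_apply, Pi.single_apply]
      split_ifs <;> ring
    · intro d _; funext i; simp only [Pi.add_apply, Pi.single_apply]
      split_ifs <;> ring
  have hsum : ∑ t : ZMod p,
      (univ.filter (fun d : Fin m → ZMod p => ∑ i, α i * d i = t)).card
      = p ^ m := by
    have h := Finset.card_eq_sum_card_fiberwise (s := (univ : Finset (Fin m → ZMod p)))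
      (t := univ) (f := fun d => ∑ i, α i * d i) (fun x _ => mem_univ _)
    rw [← h]
    simp [Fintype.card_fun]
  have hconst : ∑ t : ZMod p,
      (univ.filter (fun d : Fin m → ZMod p => ∑ i, α i * d i = t)).card
      = p * (univ.filter (fun d : Fin m → ZMod p => ∑ i, α i * d i = s)).card := by
    rw [Finset.sum_congr rfl (fun t _ => key t s)]
    simp [Finset.sum_const, ZMod.card, mul_comm]
  have hp : 0 < p := (Fact.out : p.Prime).pos
  have hpow : p * p ^ (m - 1) = p ^ m := by
    rw [← pow_succ', Nat.sub_add_cancel hm]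
  have h2 := hconst.symm.trans hsum
  rw [← hpow] at h2
  exact Nat.eq_of_mul_eq_mul_left hp h2

lemma count_ne {p : ℕ} [Fact p.Prime] (m : ℕ) (hm : 1 ≤ m)
    (α : Fin m → ZMod p) (hα : α ≠ 0) (t : ZMod p) :
    ∑ d : Fin m → ZMod p, (if (∑ i, α i * d i) + t ≠ 0 then (1 : ℕ) else 0)
      = p ^ (m - 1) * (p - 1) := by
  classical
  rw [← Finset.card_filter]
  have h1 : (univ.filter (fun d : Fin m → ZMod p => ¬((∑ i, α i * d i) + t = 0))).card
      = Fintype.card (Fin m → ZMod p)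
        - (univ.filter (fun d : Fin m → ZMod p => (∑ i, α i * d i) + t = 0)).card := by
    rw [Finset.filter_not, Finset.card_sdiff_of_subset (Finset.filter_subset _ _)]
    simp
  rw [h1]
  have h2 : (univ.filter (fun d : Fin m → ZMod p => (∑ i, α i * d i) + t = 0)).card
      = p ^ (m - 1) := by
    have heq : (univ.filter (fun d : Fin m → ZMod p => (∑ i, α i * d i) + t = 0))
        = univ.filter (fun d : Fin m → ZMod p => (∑ i, α i * d i) = -t) := by
      apply Finset.filter_congr
      intro d _
      exact add_eq_zero_iff_eq_neg
    rw [heq]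
    exact fiber_card m hm α hα (-t)
  rw [h2, Fintype.card_fun]
  have hcard : Fintype.card (ZMod p) = p := ZMod.card p
  rw [hcard, Fintype.card_fin]
  have hp : 1 ≤ p := (Fact.out : p.Prime).pos
  have : p ^ m = p ^ (m - 1) * p := by
    rw [← pow_succ, Nat.sub_add_cancel hm]
  rw [this, Nat.mul_sub, Nat.mul_one]

lemma delta_card {p m r : ℕ} [Fact p.Prime] (hm : 1 ≤ m) (hrp : r < p) :
    (univ.filter (fun v : Fin m → ZMod p => ∀ i : Fin m, (v i).val ≤
      (((if (i : ℕ) = 0 then (r : ZMod p) else 0)) : ZMod p).val)).card = r + 1 := by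
  classical
  have hrv : ((r : ZMod p)).val = r := ZMod.val_cast_of_lt hrp
  rw [show r + 1 = (Finset.range (r + 1)).card from (Finset.card_range _).symm]
  refine Finset.card_bij' (fun v _ => (v ⟨0, by omega⟩).val)
    (fun k _ => Pi.single (⟨0, by omega⟩ : Fin m) ((k : ℕ) : ZMod p)) ?_ ?_ ?_ ?_
  · intro v hv
    simp only [mem_filter, mem_univ, true_and] at hv
    have h2 := hv ⟨0, by omega⟩
    simp only [Finset.mem_range]
    simp only [show ((⟨0, by omega⟩ : Fin m) : ℕ) = 0 from rfl, if_true] at h2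
    simp only [hrv] at h2
    omega
  · intro k hk
    simp only [Finset.mem_range] at hk
    simp only [mem_filter, mem_univ, true_and]
    intro i
    by_cases hi : i = ⟨0, by omega⟩
    · subst hi
      simp only [Pi.single_eq_same,
        show ((⟨0, by omega⟩ : Fin m) : ℕ) = 0 from rfl, if_true, hrv,
        ZMod.val_cast_of_lt (show k < p by omega)]
      omega
    · rw [Pi.single_eq_of_ne hi]
      simp
  · intro v hv
    simp only [mem_filter, mem_univ, true_and] at hv
    funext i
    by_cases hi : i = ⟨0, by omega⟩
    · subst hi
      simp only [Pi.single_eq_same]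
      rw [ZMod.natCast_val, ZMod.cast_id]
    · simp only [Pi.single_eq_of_ne hi]
      have h2 := hv i
      have hne : (i : ℕ) ≠ 0 := by
        intro h; exact hi (Fin.ext h)
      rw [if_neg hne] at h2
      simp only [ZMod.val_zero, Nat.le_zero] at h2
      exact ((ZMod.val_eq_zero _).mp h2).symm
  · intro k hk
    simp only [Finset.mem_range] at hk
    simp only [Pi.single_eq_same]
    exact ZMod.val_cast_of_lt (by omega)



open scoped Classical in
/-- Theorem 3.1, nonzero-α case: For `Δ = ⟨(r,0,…,0)⟩`,
`1 ≤ r ≤ p-1`, `L = Δᶜ + uF_p^m`, and `a = α + uβ` with `α ≠ 0`, the Lee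
weight of the codeword `c_L(a)` equals `2p^{m-1}(p-1)(p^m - r - 1)`. -/
theorem lee_weight_nonzero_alpha (p m r : ℕ) [Fact p.Prime] (hp : Odd p)
    (hm : 2 ≤ m) (hr : 1 ≤ r) (hr' : r ≤ p - 1)
    (Δ : Set (Fin m → ZMod p))
    (hΔ : Δ = {v | ∀ i : Fin m, (v i).val ≤
      (((if (i : ℕ) = 0 then (r : ZMod p) else 0)) : ZMod p).val})
    (α β : Fin m → ZMod p) (hα : α ≠ 0) :
    (∑ c : Fin m → ZMod p, ∑ d : Fin m → ZMod p,
      if c ∈ Δᶜ then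
        ((if (∑ i, (TrivSqZeroExt.inl (α i) + TrivSqZeroExt.inr (β i) :
              DualNumber (ZMod p)) *
            (TrivSqZeroExt.inl (c i) + TrivSqZeroExt.inr (d i))).snd ≠ 0
          then 1 else 0) +
         (if (∑ i, (TrivSqZeroExt.inl (α i) + TrivSqZeroExt.inr (β i) :
              DualNumber (ZMod p)) *
            (TrivSqZeroExt.inl (c i) + TrivSqZeroExt.inr (d i))).fst +
            (∑ i, (TrivSqZeroExt.inl (α i) + TrivSqZeroExt.inr (β i) :
              DualNumber (ZMod p)) *
            (TrivSqZeroExt.inl (c i) + TrivSqZeroExt.inr (d i))).snd ≠ 0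
          then 1 else 0))
      else 0) =
    2 * p ^ (m - 1) * (p - 1) * (p ^ m - r - 1) := by
  have hm1 : 1 ≤ m := by omega
  have hp2 : 2 ≤ p := (Fact.out : p.Prime).two_le
  have hrp : r < p := by omega
  -- simplify the dual number expressions
  have hsnd : ∀ c d : Fin m → ZMod p,
      (∑ i, (TrivSqZeroExt.inl (α i) + TrivSqZeroExt.inr (β i) : DualNumber (ZMod p)) *
        (TrivSqZeroExt.inl (c i) + TrivSqZeroExt.inr (d i))).snd
      = (∑ i, α i * d i) + ∑ i, β i * c i := by
    intro c d
    rw [TrivSqZeroExt.snd_sum, ← Finset.sum_add_distrib]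
    apply Finset.sum_congr rfl
    intro i _
    simp [mul_comm]
  have hfst : ∀ c d : Fin m → ZMod p,
      (∑ i, (TrivSqZeroExt.inl (α i) + TrivSqZeroExt.inr (β i) : DualNumber (ZMod p)) *
        (TrivSqZeroExt.inl (c i) + TrivSqZeroExt.inr (d i))).fst
      = ∑ i, α i * c i := by
    intro c d
    rw [TrivSqZeroExt.fst_sum]
    apply Finset.sum_congr rfl
    intro i _
    simp
  simp only [hsnd, hfst]
  -- inner sums
  have hinner : ∀ c : Fin m → ZMod p,
      (∑ d : Fin m → ZMod p,
        ((if (∑ i, α i * d i) + ∑ i, β i * c i ≠ 0 then (1:ℕ) else 0) +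
         (if (∑ i, α i * c i) + ((∑ i, α i * d i) + ∑ i, β i * c i) ≠ 0 then (1:ℕ) else 0)))
      = p ^ (m - 1) * (p - 1) + p ^ (m - 1) * (p - 1) := by
    intro c
    rw [Finset.sum_add_distrib]
    congr 1
    · exact count_ne m hm1 α hα _
    · have hre : ∀ d : Fin m → ZMod p,
          ((∑ i, α i * c i) + ((∑ i, α i * d i) + ∑ i, β i * c i)
            = (∑ i, α i * d i) + ((∑ i, α i * c i) + ∑ i, β i * c i)) := by
        intro d; ring
      simp only [hre]
      exact count_ne m hm1 α hα _
  have hsum2 : ∀ c : Fin m → ZMod p,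
      (∑ d : Fin m → ZMod p,
        if c ∈ Δᶜ then
          ((if (∑ i, α i * d i) + ∑ i, β i * c i ≠ 0 then (1:ℕ) else 0) +
           (if (∑ i, α i * c i) + ((∑ i, α i * d i) + ∑ i, β i * c i) ≠ 0 then (1:ℕ) else 0))
        else 0)
      = if c ∈ Δᶜ then p ^ (m - 1) * (p - 1) + p ^ (m - 1) * (p - 1) else 0 := by
    intro c
    by_cases h : c ∈ Δᶜ
    · simp only [if_pos h]
      exact hinner c
    · simp only [if_neg h, Finset.sum_const_zero]
  rw [Finset.sum_congr rfl (fun c _ => hsum2 c)]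
  -- cardinality of Δᶜ
  have hΔcard : (univ.filter (fun c : Fin m → ZMod p => c ∈ Δ)).card = r + 1 := by
    have he : (univ.filter (fun c : Fin m → ZMod p => c ∈ Δ))
        = (univ.filter (fun v : Fin m → ZMod p => ∀ i : Fin m, (v i).val ≤
            (((if (i : ℕ) = 0 then (r : ZMod p) else 0)) : ZMod p).val)) := by
      ext c
      simp [hΔ, Set.mem_setOf_eq]
    rw [he]
    exact delta_card hm1 hrp
  have hcompl : (univ.filter (fun c : Fin m → ZMod p => c ∈ Δᶜ)).card
      = p ^ m - (r + 1) := by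
    have he : univ.filter (fun c : Fin m → ZMod p => c ∈ Δᶜ)
        = univ \ univ.filter (fun c : Fin m → ZMod p => c ∈ Δ) := by
      ext c
      simp [Set.mem_compl_iff]
    rw [he, Finset.card_sdiff_of_subset (Finset.filter_subset _ _), hΔcard, Finset.card_univ,
      Fintype.card_fun, ZMod.card, Fintype.card_fin]
  rw [Finset.sum_ite, Finset.sum_const, Finset.sum_const_zero, add_zero, smul_eq_mul, hcompl]
  have h1 : p ^ m - (r + 1) = p ^ m - r - 1 := by omega
  rw [h1]
  generalize p ^ m - r - 1 = N
  generalize p ^ (m - 1) = q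
  generalize p - 1 = w
  ring
end

section
/- (Griesmer computation in Theorem 4.1) Let p be an odd prime, m ≥ 3, 1 ≤ r ≤ p−1. Then Σ_{i=0}^{2m−1} ⌈(2p^{m−1}(p−1)(p^m − r − 1) + 1)/p^i⌉ ≥ 2p^m(p^m − r − 1) + 1. Consequently no [2p^m(p^m−r−1), 2m, 2p^{m−1}(p−1)(p^m−r−1)+1] linear code over F_p exists, so a code with parameters [2p^m(p^m−r−1), 2m, 2p^{m−1}(p−1)(p^m−r−1)] is distance optimal. -/
/-!
Griesmer bound by the residual-code induction: if `c` is a codeword of minimum weight `w ≥ d`,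
zeroing out the support of `c` gives a code on `n - w` coordinates whose dimension drops by at
most one (only multiples of `c` are killed) and whose minimum distance is at least `⌈w / q⌉`, by
pigeonhole on the ratios `x i / c i` over the support of `c`.

For the computation write `D = a + 1` with `a = 2 p^(m-1) (p-1) M`, `M = p^m - r - 1`. For
`i < m` we have `p^i ∣ a`, so `⌈D / p^i⌉ ≥ a / p^i + 1`, and `⌈D / p^i⌉ ≥ a / p^i` always.
The geometric sum of `a / p^i` over `i < 2m` is `2 p^m M - 2M / p^m > 2 p^m M - 2` since `M < p^m`,
so the Griesmer sum exceeds `2 p^m M + m - 2`: it is at least `2 p^m M + 1` once `m ≥ 2`, whereas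
a code of length `2 p^m M` forces it to be at most `2 p^m M`.
-/

open Finset Module

theorem finrank_le_finrank_map_add_one {K V W : Type*} [Field K] [AddCommGroup V] [Module K V]
    [FiniteDimensional K V] [AddCommGroup W] [Module K W] (C : Submodule K V) (f : V →ₗ[K] W)
    (v : V) (hker : ∀ x ∈ C, f x = 0 → x ∈ K ∙ v) :
    finrank K C ≤ finrank K (C.map f) + 1 := by
  have hrank := (f.domRestrict C).finrank_range_add_finrank_ker
  rw [LinearMap.range_domRestrict] at hrank
  have hker' : finrank K (LinearMap.ker (f.domRestrict C)) ≤ 1 := by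
    rw [← Submodule.finrank_map_subtype_eq]
    refine (Submodule.finrank_mono ?_).trans (finrank_span_le_card {v})
    rintro _ ⟨x, hx, rfl⟩
    exact hker x x.2 hx
  omega

theorem exists_mem_ne_zero_forall_hammingNorm_le {F ι : Type*} [Field F] [DecidableEq F]
    [Fintype ι] {C : Submodule F (ι → F)} (hC : C ≠ ⊥) :
    ∃ c ∈ C, c ≠ 0 ∧ ∀ x ∈ C, x ≠ 0 → hammingNorm c ≤ hammingNorm x := by
  obtain ⟨c, ⟨hc, hc0⟩, hmin⟩ := (measure hammingNorm).wf.has_min {x | x ∈ C ∧ x ≠ 0}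
    (Submodule.exists_mem_ne_zero_of_ne_bot hC)
  exact ⟨c, hc, hc0, fun x hx hx0 => not_lt.1 (hmin x ⟨hx, hx0⟩)⟩

section Residual

variable {F ι : Type*} [Field F] [DecidableEq F]

/-- The residual code of `C` with respect to `c` is `C.map (residualMap c)`: it is kept inside
`ι → F` (supported off the support of `c`) instead of being punctured to a smaller index type. -/
def residualMap (c : ι → F) : (ι → F) →ₗ[F] ι → F where
  toFun x i := if c i = 0 then x i else 0
  map_add' x y := by ext i; by_cases h : c i = 0 <;> simp [h]
  map_smul' a x := by ext i; by_cases h : c i = 0 <;> simp [h]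

lemma residualMap_apply (c x : ι → F) (i : ι) :
    residualMap c x i = if c i = 0 then x i else 0 := rfl

lemma residualMap_self (c : ι → F) : residualMap c c = 0 := by
  ext i; by_cases h : c i = 0 <;> simp [residualMap_apply, h]

variable [Fintype ι]

lemma hammingNorm_sub_smul (c x : ι → F) (a : F) :
    hammingNorm (x - a • c) =
      #{i | c i ≠ 0 ∧ x i ≠ a * c i} + hammingNorm (residualMap c x) := by
  rw [hammingNorm, ← card_filter_add_card_filter_not (p := fun i => c i ≠ 0), filter_filter,
    filter_filter, hammingNorm]
  congr 1 <;> congr 1 <;> ext i <;> by_cases hci : c i = 0 <;>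
    simp [residualMap_apply, hci, sub_eq_zero]

lemma card_filter_ne_add_card_filter_eq (c x : ι → F) (a : F) :
    #{i | c i ≠ 0 ∧ x i ≠ a * c i} + #{i | c i ≠ 0 ∧ x i = a * c i} = hammingNorm c := by
  rw [hammingNorm, ← card_filter_add_card_filter_not (s := {i | c i ≠ 0})
    (p := fun i => x i ≠ a * c i), filter_filter, filter_filter]
  simp only [not_not]

lemma card_filter_eq_zero_add_hammingNorm {c : ι → F} {T : Finset ι}
    (hT : ∀ i ∉ T, c i = 0) :
    #(T.filter (c · = 0)) + hammingNorm c = #T := by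
  rw [← card_filter_add_card_filter_not (s := T) (p := (c · = 0)), hammingNorm]
  congr 2
  ext i
  simp only [mem_filter, mem_univ, true_and]
  exact ⟨fun hci => ⟨by_contra fun hiT => hci (hT i hiT), hci⟩, And.right⟩

variable {C : Submodule F (ι → F)} {c : ι → F}

lemma mem_span_singleton_of_residualMap_eq_zero (hc : c ∈ C) (hc0 : c ≠ 0)
    (hmin : ∀ x ∈ C, x ≠ 0 → hammingNorm c ≤ hammingNorm x) {x : ι → F} (hx : x ∈ C)
    (hres : residualMap c x = 0) : x ∈ F ∙ c := by
  obtain ⟨j, hj⟩ : ∃ j, c j ≠ 0 := Function.ne_iff.mp hc0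
  set a := x j / c j
  have hlt : hammingNorm (x - a • c) < hammingNorm c := by
    rw [hammingNorm_sub_smul, hres, hammingNorm_zero, add_zero,
      ← card_filter_ne_add_card_filter_eq c x a, lt_add_iff_pos_right, card_pos]
    exact ⟨j, by simp [hj, a]⟩
  have : x - a • c = 0 := by
    by_contra h
    exact (hmin _ (C.sub_mem hx (C.smul_mem a hc)) h).not_gt hlt
  exact Submodule.mem_span_singleton.2 ⟨a, (sub_eq_zero.1 this).symm⟩

variable [Fintype F]

lemma exists_hammingNorm_div_card_le_card_eq_mul (c x : ι → F) :
    ∃ a : F, (hammingNorm c : ℚ) / Fintype.card F ≤ #{i | c i ≠ 0 ∧ x i = a * c i} := by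
  have hF : (Fintype.card F : ℚ) ≠ 0 := by positivity
  obtain ⟨a, -, ha⟩ := exists_le_card_fiber_of_nsmul_le_card_of_maps_to
    (s := {i | c i ≠ 0}) (f := fun i => x i / c i) (fun _ _ => mem_univ _) univ_nonempty
    (b := (hammingNorm c : ℚ) / Fintype.card F)
    (by rw [nsmul_eq_mul, card_univ, mul_div_cancel₀ _ hF]; rfl)
  refine ⟨a, ha.trans_eq ?_⟩
  rw [filter_filter]
  congr 3
  ext i
  exact and_congr_right fun hci => div_eq_iff hci

lemma ceil_hammingNorm_div_card_le_hammingNorm_residualMap (hc : c ∈ C)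
    (hmin : ∀ x ∈ C, x ≠ 0 → hammingNorm c ≤ hammingNorm x) {x : ι → F} (hx : x ∈ C)
    (hres : residualMap c x ≠ 0) :
    ⌈(hammingNorm c : ℚ) / Fintype.card F⌉₊ ≤ hammingNorm (residualMap c x) := by
  obtain ⟨a, ha⟩ := exists_hammingNorm_div_card_le_card_eq_mul c x
  have hres' : residualMap c (x - a • c) = residualMap c x := by
    rw [map_sub, map_smul, residualMap_self, smul_zero, sub_zero]
  have hz : x - a • c ≠ 0 := fun h => hres (by rw [← hres', h, map_zero])
  have hle := hmin _ (C.sub_mem hx (C.smul_mem a hc)) hz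
  rw [hammingNorm_sub_smul, ← card_filter_ne_add_card_filter_eq c x a] at hle
  exact Nat.ceil_le.2 (ha.trans (by exact_mod_cast (Nat.add_le_add_iff_left.1 hle)))

end Residual

section Griesmer

variable {F ι : Type*} [Field F] [Fintype F] [DecidableEq F] [Fintype ι]

theorem sum_ceil_div_pow_le_card_of_support_subset (k : ℕ) {C : Submodule F (ι → F)}
    (hk : k ≤ finrank F C) {T : Finset ι} (hT : ∀ x ∈ C, ∀ i ∉ T, x i = 0) {d : ℕ}
    (hd : ∀ x ∈ C, x ≠ 0 → d ≤ hammingNorm x) :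
    ∑ i ∈ range k, ⌈(d : ℚ) / (Fintype.card F : ℚ) ^ i⌉ ≤ #T := by
  induction k generalizing C T d with
  | zero => simp
  | succ k ih =>
    have hC : C ≠ ⊥ := by
      rintro rfl
      simp at hk
    obtain ⟨c, hc, hc0, hmin⟩ := exists_mem_ne_zero_forall_hammingNorm_le hC
    set q : ℚ := (Fintype.card F : ℚ)
    set w := hammingNorm c
    have hdw : d ≤ w := hd c hc hc0
    have hcard : #(T.filter (c · = 0)) + w = #T := card_filter_eq_zero_add_hammingNorm (hT c hc)
    have hrank := finrank_le_finrank_map_add_one C (residualMap c) c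
      fun x hx => mem_span_singleton_of_residualMap_eq_zero hc hc0 hmin hx
    have hih := ih (C := C.map (residualMap c)) (T := T.filter (c · = 0))
      (d := ⌈(w : ℚ) / q⌉₊) (by omega) ?support ?distance
    case support =>
      rintro _ ⟨x, hx, rfl⟩ i hi
      rw [mem_filter, not_and_or] at hi
      rw [residualMap_apply]
      split_ifs with hci
      · exact hT x hx i (hi.resolve_right (not_not.2 hci))
      · rfl
    case distance =>
      rintro _ ⟨x, hx, rfl⟩ hx0
      exact ceil_hammingNorm_div_card_le_hammingNorm_residualMap hc hmin hx hx0
    have hq : 0 < q := by positivity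
    calc ∑ i ∈ range (k + 1), ⌈(d : ℚ) / q ^ i⌉
        = ∑ i ∈ range k, ⌈(d : ℚ) / q ^ (i + 1)⌉ + d := by simp [sum_range_succ']
      _ ≤ ∑ i ∈ range k, ⌈(⌈(w : ℚ) / q⌉₊ : ℚ) / q ^ i⌉ + w := by
        refine add_le_add (sum_le_sum fun i _ => Int.ceil_mono ?_) (by exact_mod_cast hdw)
        calc (d : ℚ) / q ^ (i + 1) = (d / q) / q ^ i := by rw [pow_succ', div_div]
          _ ≤ (w / q) / q ^ i := by gcongr
          _ ≤ _ := by gcongr; exact Nat.le_ceil _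
      _ ≤ #T := by push_cast [← hcard]; linarith

theorem griesmer_bound (C : Submodule F (ι → F)) {d : ℕ}
    (hd : ∀ x ∈ C, x ≠ 0 → d ≤ hammingNorm x) :
    ∑ i ∈ range (finrank F C), ⌈(d : ℚ) / (Fintype.card F : ℚ) ^ i⌉ ≤
      Fintype.card ι :=
  sum_ceil_div_pow_le_card_of_support_subset _ le_rfl (T := univ) (by simp) hd

end Griesmer

theorem sum_range_sub_one_mul_div_pow_succ {K : Type*} [Field K] {q : K} (hq : q ≠ 0) (y : K)
    (n : ℕ) : ∑ i ∈ range n, (q - 1) * y / q ^ (i + 1) = y - y / q ^ n := by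
  have hterm : ∀ i, (q - 1) * y / q ^ (i + 1) = y / q ^ i - y / q ^ (i + 1) := by
    intro i
    field_simp
    ring
  simp_rw [hterm]
  rw [sum_range_sub', pow_zero, div_one]

theorem div_add_one_le_ceil_add_one_div {a b : ℕ} (hb : 0 < b) (hab : b ∣ a) :
    (a : ℚ) / b + 1 ≤ ⌈((a + 1 : ℕ) : ℚ) / b⌉ := by
  obtain ⟨t, rfl⟩ := hab
  have hb' : (0 : ℚ) < b := by exact_mod_cast hb
  have : (t : ℤ) < ⌈((b * t + 1 : ℕ) : ℚ) / b⌉ := by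
    rw [Int.lt_ceil]
    push_cast
    rw [lt_div_iff₀ hb']
    linarith
  rw [Nat.cast_mul, mul_div_cancel_left₀ _ hb'.ne']
  exact_mod_cast this

theorem sum_div_pow_add_le_sum_ceil_add_one_div_pow {a p m : ℕ} (hp : 0 < p)
    (hdvd : ∀ i < m, p ^ i ∣ a) (n : ℕ) :
    ∑ i ∈ range (m + n), (a : ℚ) / (p : ℚ) ^ i + m ≤
      ∑ i ∈ range (m + n), (⌈((a + 1 : ℕ) : ℚ) / (p : ℚ) ^ i⌉ : ℚ) := by
  rw [sum_range_add, sum_range_add]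
  calc _ = ∑ i ∈ range m, ((a : ℚ) / (p : ℚ) ^ i + 1)
        + ∑ i ∈ range n, (a : ℚ) / (p : ℚ) ^ (m + i) := by
        rw [sum_add_distrib, sum_const, card_range, nsmul_eq_mul, mul_one]; ring
    _ ≤ _ := by
      gcongr with i hi i
      · exact_mod_cast div_add_one_le_ceil_add_one_div (pow_pos hp i) (hdvd i (mem_range.1 hi))
      · exact (div_le_div_of_nonneg_right (by push_cast; linarith) (by positivity)).trans
          (Int.le_ceil _)

theorem natCast_add_one_le_sum_ceil_div_pow {p m M : ℕ} (hm : 2 ≤ m) (hM : M < p ^ m) :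
    ((2 * p ^ m * M + 1 : ℕ) : ℤ) ≤
      ∑ i ∈ range (2 * m),
        ⌈((2 * p ^ (m - 1) * (p - 1) * M + 1 : ℕ) : ℚ) / (p : ℚ) ^ i⌉ := by
  have hp : 0 < p := Nat.pos_of_ne_zero fun h => by simp [h, zero_pow (by omega : m ≠ 0)] at hM
  obtain ⟨k, rfl⟩ : ∃ k, m = k + 1 := ⟨m - 1, by omega⟩
  rw [Nat.add_sub_cancel, show 2 * (k + 1) = k + 1 + (k + 1) from two_mul _]
  set a := 2 * p ^ k * (p - 1) * M
  have hp' : (0 : ℚ) < p := by exact_mod_cast hp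
  have hgeom : ∑ i ∈ range (k + 1 + (k + 1)), (a : ℚ) / (p : ℚ) ^ i
      = 2 * p ^ (k + 1) * M - 2 * M / (p : ℚ) ^ (k + 1) := by
    have ha : (a : ℚ) = 2 * p ^ k * ((p : ℚ) - 1) * M := by
      simp only [a]; push_cast [Nat.cast_sub hp]; ring
    calc _ = ∑ i ∈ range (k + 1 + (k + 1)),
            ((p : ℚ) - 1) * (2 * p ^ (k + 1) * M) / (p : ℚ) ^ (i + 1) :=
          sum_congr rfl fun i _ => by rw [ha]; field_simp; ring
      _ = 2 * p ^ (k + 1) * M - 2 * p ^ (k + 1) * M / (p : ℚ) ^ (k + 1 + (k + 1)) :=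
          sum_range_sub_one_mul_div_pow_succ hp'.ne' _ _
      _ = _ := by field_simp; ring
  have hceil := sum_div_pow_add_le_sum_ceil_add_one_div_pow (a := a) hp
    (fun i hi => ((pow_dvd_pow p (Nat.lt_succ_iff.1 hi)).mul_left 2).mul_right _ |>.mul_right M)
    (k + 1)
  have hlt : (2 * M : ℚ) / (p : ℚ) ^ (k + 1) < 2 := by
    rw [div_lt_iff₀ (by positivity)]
    exact_mod_cast (by omega : 2 * M < 2 * p ^ (k + 1))
  have key : ((2 * p ^ (k + 1) * M : ℕ) : ℚ) + (k + 1 : ℕ) - 2 <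
      ∑ i ∈ range (k + 1 + (k + 1)), (⌈((a + 1 : ℕ) : ℚ) / (p : ℚ) ^ i⌉ : ℚ) := by
    push_cast at hceil ⊢
    linarith
  have : ((2 * p ^ (k + 1) * M : ℕ) : ℤ) + (k + 1 : ℕ) - 2 <
      ∑ i ∈ range (k + 1 + (k + 1)), ⌈((a + 1 : ℕ) : ℚ) / (p : ℚ) ^ i⌉ := by
    exact_mod_cast key
  push_cast at this ⊢
  omega

theorem griesmer_distance_optimal_general (p m r : ℕ) [Fact p.Prime]
    (hm : 3 ≤ m) :
    ((2 * p ^ m * (p ^ m - r - 1) + 1 : ℕ) : ℤ) ≤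
      ∑ i ∈ Finset.range (2 * m),
        ⌈((2 * p ^ (m - 1) * (p - 1) * (p ^ m - r - 1) + 1 : ℕ) : ℚ) / (p : ℚ) ^ i⌉ ∧
    ¬ ∃ C : Submodule (ZMod p) (Fin (2 * p ^ m * (p ^ m - r - 1)) → ZMod p),
        Module.finrank (ZMod p) C = 2 * m ∧
        ∀ x ∈ C, x ≠ 0 →
          2 * p ^ (m - 1) * (p - 1) * (p ^ m - r - 1) + 1 ≤ hammingNorm x := by
  have hpow : 0 < p ^ m := pow_pos (Fact.out : p.Prime).pos m
  have hsum := natCast_add_one_le_sum_ceil_div_pow (by omega : 2 ≤ m)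
    (by omega : p ^ m - r - 1 < p ^ m)
  refine ⟨hsum, fun ⟨C, hCrank, hCmin⟩ => ?_⟩
  have hgriesmer := griesmer_bound C hCmin
  rw [hCrank, ZMod.card, Fintype.card_fin] at hgriesmer
  omega

/-- Griesmer computation in Theorem 4.1: For `p` an odd prime,
`m ≥ 3`, `1 ≤ r ≤ p-1`:
`Σ_{i=0}^{2m-1} ⌈(2p^{m-1}(p-1)(p^m-r-1)+1)/p^i⌉ ≥ 2p^m(p^m-r-1)+1`, and
consequently no linear `[2p^m(p^m-r-1), 2m]` code over `F_p` with minimum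
distance `≥ 2p^{m-1}(p-1)(p^m-r-1)+1` exists. -/
theorem griesmer_distance_optimal (p m r : ℕ) [Fact p.Prime] (hp : Odd p)
    (hm : 3 ≤ m) (hr : 1 ≤ r) (hr' : r ≤ p - 1) :
    ((2 * p ^ m * (p ^ m - r - 1) + 1 : ℕ) : ℤ) ≤
      ∑ i ∈ Finset.range (2 * m),
        ⌈((2 * p ^ (m - 1) * (p - 1) * (p ^ m - r - 1) + 1 : ℕ) : ℚ) / (p : ℚ) ^ i⌉ ∧
    ¬ ∃ C : Submodule (ZMod p) (Fin (2 * p ^ m * (p ^ m - r - 1)) → ZMod p),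
        Module.finrank (ZMod p) C = 2 * m ∧
        ∀ x ∈ C, x ≠ 0 →
          2 * p ^ (m - 1) * (p - 1) * (p ^ m - r - 1) + 1 ≤ hammingNorm x :=
  griesmer_distance_optimal_general p m r hm
end

section
/- (Griesmer equality in Theorem 4.1) Let p be an odd prime, m ≥ 3, and r = (p−1)/2. Then Σ_{i=0}^{2m−1} ⌈2p^{m−1}(p−1)(p^m − r − 1)/p^i⌉ = 2p^m(p^m − r − 1), i.e., the parameters n = 2p^m(p^m−r−1), k = 2m, d = 2p^{m−1}(p−1)(p^m−r−1) attain the Griesmer bound with equality. -/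
/-- Griesmer equality in Theorem 4.1: For `p` an odd prime,
`m ≥ 3`, `r = (p-1)/2`:
`Σ_{i=0}^{2m-1} ⌈2p^{m-1}(p-1)(p^m-r-1)/p^i⌉ = 2p^m(p^m-r-1)`, i.e. the
parameters `n = 2p^m(p^m-r-1)`, `k = 2m`, `d = 2p^{m-1}(p-1)(p^m-r-1)` attain
the Griesmer bound with equality. -/
theorem griesmer_equality (p m r : ℕ) [Fact p.Prime] (hp : Odd p)
    (hm : 3 ≤ m) (hr : 1 ≤ r) (hpr : p = 2 * r + 1) :
    ∑ i ∈ Finset.range (2 * m),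
        ⌈((2 * p ^ (m - 1) * (p - 1) * (p ^ m - r - 1) : ℕ) : ℚ) / (p : ℚ) ^ i⌉
      = ((2 * p ^ m * (p ^ m - r - 1) : ℕ) : ℤ) := by
  have hp3 : 3 ≤ p := by omega
  have hm1 : 1 ≤ m := by omega
  have hq : r + 1 ≤ p ^ m := le_trans (by omega) (Nat.le_self_pow (by omega) p)
  have hpQ : (0:ℚ) < (p:ℚ) := by exact_mod_cast (by omega : 0 < p)
  have hp1 : (3:ℚ) ≤ (p:ℚ) := by exact_mod_cast hp3
  have hpne : (p:ℚ) ≠ 0 := ne_of_gt hpQ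
  have hpr' : (p:ℚ) = 2 * r + 1 := by exact_mod_cast congrArg (Nat.cast : ℕ → ℚ) hpr
  have hqcast : ((p ^ m - r - 1 : ℕ) : ℚ) = (p:ℚ)^m - r - 1 := by
    have h : p ^ m - r - 1 = p ^ m - (r + 1) := by omega
    rw [h, Nat.cast_sub hq]; push_cast; ring
  have hdcast : ((2 * p ^ (m - 1) * (p - 1) * (p ^ m - r - 1) : ℕ) : ℚ)
      = 2 * (p:ℚ) ^ (m-1) * ((p:ℚ) - 1) * ((p:ℚ)^m - r - 1) := by
    push_cast [Nat.cast_sub (by omega : 1 ≤ p), hqcast]; ring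
  -- term formula for i < m
  have keyA : ∀ i < m,
      ⌈((2 * p ^ (m - 1) * (p - 1) * (p ^ m - r - 1) : ℕ) : ℚ) / (p : ℚ) ^ i⌉
        = ((2 * p ^ (m - 1 - i) * (p - 1) * (p ^ m - r - 1) : ℕ) : ℤ) := by
    intro i hi
    have hexp : (p:ℚ) ^ (m - 1) = (p:ℚ) ^ i * (p:ℚ) ^ (m - 1 - i) := by
      rw [← pow_add]; congr 1; omega
    have hdiv : ((2 * p ^ (m - 1) * (p - 1) * (p ^ m - r - 1) : ℕ) : ℚ) / (p : ℚ) ^ i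
        = ((2 * p ^ (m - 1 - i) * (p - 1) * (p ^ m - r - 1) : ℕ) : ℚ) := by
      rw [div_eq_iff (pow_ne_zero _ hpne)]
      push_cast
      rw [hexp]; ring
    rw [hdiv, Int.ceil_natCast]
  -- term formula for i = m + j, j < m
  have keyB : ∀ j < m,
      ⌈((2 * p ^ (m - 1) * (p - 1) * (p ^ m - r - 1) : ℕ) : ℚ) / (p : ℚ) ^ (m + j)⌉
        = (4 * r * p ^ (m - 1 - j) : ℤ) - (if j = 0 then (p:ℤ) - 1 else 0) := by
    intro j hj
    have e1 : (p:ℚ) ^ (m + j) = (p:ℚ) ^ (m-1) * (p:ℚ)^(j+1) := by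
      rw [← pow_add]; congr 1; omega
    have e2 : (p:ℚ) ^ (m - 1 - j) * (p:ℚ)^(j+1) = (p:ℚ) ^ m := by
      rw [← pow_add]; congr 1; omega
    have hdiv : ((2 * p ^ (m - 1) * (p - 1) * (p ^ m - r - 1) : ℕ) : ℚ) / (p : ℚ) ^ (m + j)
        = ((4 * r * p ^ (m - 1 - j) : ℤ) : ℚ) - ((p:ℚ)^2 - 1) / (p:ℚ)^(j+1) := by
      rw [hdcast, e1, ← div_div]
      have h5 : 2 * (p:ℚ)^(m-1) * ((p:ℚ)-1) * ((p:ℚ)^m - r - 1) / (p:ℚ)^(m-1)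
          = 4*(r:ℚ)*(p:ℚ)^m - ((p:ℚ)^2 - 1) := by
        rw [div_eq_iff (pow_ne_zero _ hpne), hpr']; ring
      rw [h5, sub_div,
        show (4:ℚ)*(r:ℚ)*(p:ℚ)^m = (4*(r:ℚ)*(p:ℚ)^(m-1-j)) * (p:ℚ)^(j+1) by
          rw [← e2]; ring,
        mul_div_assoc, div_self (pow_ne_zero _ hpne), mul_one]
      push_cast; ring
    rw [hdiv, sub_eq_add_neg, add_comm, Int.ceil_add_intCast, Int.ceil_neg]
    have hfloor : ⌊((p:ℚ)^2 - 1) / (p:ℚ)^(j+1)⌋ = if j = 0 then (p:ℤ) - 1 else 0 := by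
      rcases Nat.eq_zero_or_pos j with h0 | h1
      · subst h0
        rw [if_pos rfl, Int.floor_eq_iff]
        push_cast
        rw [pow_one]
        constructor
        · rw [le_div_iff₀ hpQ]; nlinarith
        · rw [div_lt_iff₀ hpQ]; nlinarith
      · rw [if_neg (by omega), Int.floor_eq_zero_iff, Set.mem_Ico]
        constructor
        · apply div_nonneg (by nlinarith) (by positivity)
        · rw [div_lt_iff₀ (by positivity), one_mul]
          have h6 : (p:ℚ)^2 ≤ (p:ℚ)^(j+1) :=
            pow_le_pow_right₀ (by linarith) (by omega)
          linarith
    rw [hfloor]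
    ring
  -- split the sum
  rw [two_mul, Finset.sum_range_add]
  rw [Finset.sum_congr rfl (fun i hi => keyA i (Finset.mem_range.mp hi)),
      Finset.sum_congr rfl (fun j hj => keyB j (Finset.mem_range.mp hj))]
  rw [Finset.sum_sub_distrib]
  have hif : (∑ j ∈ Finset.range m, (if j = 0 then (p:ℤ) - 1 else 0)) = (p:ℤ) - 1 := by
    rw [Finset.sum_ite_eq' (Finset.range m) 0 (fun _ => (p:ℤ) - 1)]
    rw [if_pos (Finset.mem_range.mpr (by omega))]
  rw [hif]
  -- reindex reflected sums
  have hrefl1 : (∑ i ∈ Finset.range m, ((2 * p ^ (m - 1 - i) * (p - 1) * (p ^ m - r - 1) : ℕ) : ℤ))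
      = ∑ i ∈ Finset.range m, ((2 * p ^ i * (p - 1) * (p ^ m - r - 1) : ℕ) : ℤ) :=
    Finset.sum_range_reflect (fun i => ((2 * p ^ i * (p - 1) * (p ^ m - r - 1) : ℕ) : ℤ)) m
  have hrefl2 : (∑ j ∈ Finset.range m, (4 * (r:ℤ) * (p:ℤ) ^ (m - 1 - j)))
      = ∑ j ∈ Finset.range m, (4 * (r:ℤ) * (p:ℤ) ^ j) :=
    Finset.sum_range_reflect (fun j => (4 * (r:ℤ) * (p:ℤ) ^ j)) m
  rw [hrefl1, hrefl2]
  have hqZ : ((p ^ m - r - 1 : ℕ) : ℤ) = (p:ℤ)^m - r - 1 := by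
    have h : p ^ m - r - 1 = p ^ m - (r + 1) := by omega
    rw [h, Nat.cast_sub hq]; push_cast; ring
  push_cast [hqZ, Nat.cast_sub (by omega : 1 ≤ p)]
  have hgeom : (∑ i ∈ Finset.range m, (p:ℤ)^i) * ((p:ℤ) - 1) = (p:ℤ)^m - 1 :=
    geom_sum_mul _ m
  have hprZ : (p:ℤ) = 2 * r + 1 := by exact_mod_cast congrArg (Nat.cast : ℕ → ℤ) hpr
  have s1 : (∑ i ∈ Finset.range m, (2 * (p:ℤ)^i * ((p:ℤ)-1) * ((p:ℤ)^m - (r:ℤ) - 1)))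
      = 2 * ((p:ℤ)-1) * ((p:ℤ)^m - (r:ℤ) - 1) * ∑ i ∈ Finset.range m, (p:ℤ)^i := by
    rw [Finset.mul_sum]; exact Finset.sum_congr rfl fun i _ => by ring
  have s2 : (∑ j ∈ Finset.range m, (4 * (r:ℤ) * (p:ℤ)^j))
      = 4 * (r:ℤ) * ∑ j ∈ Finset.range m, (p:ℤ)^j := by
    rw [Finset.mul_sum]
  rw [s1, s2]
  set G := ∑ i ∈ Finset.range m, (p:ℤ)^i with hG
  linear_combination (2*((p:ℤ)^m - (r:ℤ) - 1) + 2) * hgeom - (2*G + 1) * hprZ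
end
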